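/- Completeness of BATC modulo truly concurrent bisimulation equivalences: for all closed BATC terms p and q, if p ~p q then p = q is derivable from the BATC axioms; likewise if p ~s q then p = q, if p ~hp q then p = q, and if p ~hhp q then p = q. -/
import Mathlib


/-!
Formalization infrastructure for truly concurrent process algebra (APTC family),
following Y. Wang, "Actors: A Process Algebra Based Approach".

States of the labelled transition system are process terms; a transition is
labelled by a finite set of events (a "step"), and the target `none` denotes
successful termination √.
-/

namespace TCA

section BisimCore

variable {E S : Type} (Tr : S → Finset E → Option S → Prop)

/-- Lift a relation on states to `Option` states (`none` is successful termination √). -/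
def OptRel (R : S → S → Prop) : Option S → Option S → Prop
  | none, none => True
  | some a, some b => R a b
  | _, _ => False

/-- A step bisimulation: matching of step transitions (finite sets of
pairwise-concurrent events executed in one step). -/
def IsStepBisim (R : S → S → Prop) : Prop :=
  ∀ x y, R x y →
    (∀ X x', Tr x X x' → ∃ y', Tr y X y' ∧ OptRel R x' y') ∧
    (∀ X y', Tr y X y' → ∃ x', Tr x X x' ∧ OptRel R x' y')

/-- Step bisimilarity `~s`. -/
def StepBisimilar (x y : S) : Prop := ∃ R, IsStepBisim Tr R ∧ R x y

/-- Pomset transitions: causally ordered sequences of steps, whose label records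
the executed pomset (a sequence of steps). -/
inductive PomTr : S → List (Finset E) → Option S → Prop where
  | single {x X o} : Tr x X o → PomTr x [X] o
  | cons {x X x' l o} : Tr x X (some x') → PomTr x' l o → PomTr x (X :: l) o

/-- A pomset bisimulation: matching of pomset transitions (up to isomorphism of
the executed pomsets; events are their own labels, so isomorphic pomsets carry
the same label sequence). -/
def IsPomsetBisim (R : S → S → Prop) : Prop :=
  ∀ x y, R x y →
    (∀ l x', PomTr Tr x l x' → ∃ y', PomTr Tr y l y' ∧ OptRel R x' y') ∧
    (∀ l y', PomTr Tr y l y' → ∃ x', PomTr Tr x l x' ∧ OptRel R x' y')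

/-- Pomset bisimilarity `~p`. -/
def PomsetBisimilar (x y : S) : Prop := ∃ R, IsPomsetBisim Tr R ∧ R x y

/-- A history-preserving (hp-)bisimulation: a posetal relation, whose middle
component records the isomorphism `f` between the matched histories
(configurations); single events are matched and `f` is updated. -/
def IsHpBisim (R : S → List (E × E) → S → Prop) : Prop :=
  ∀ x f y, R x f y →
    (∀ e x', Tr x {e} x' → ∃ y', Tr y {e} y' ∧
        OptRel (fun a b => R a (f ++ [(e, e)]) b) x' y') ∧
    (∀ e y', Tr y {e} y' → ∃ x', Tr x {e} x' ∧
        OptRel (fun a b => R a (f ++ [(e, e)]) b) x' y')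

/-- History-preserving bisimilarity `~hp`. -/
def HpBisimilar (x y : S) : Prop := ∃ R, IsHpBisim Tr R ∧ R x [] y

/-- A hereditary history-preserving (hhp-)bisimulation: a downward closed
hp-bisimulation. -/
def IsHhpBisim (R : S → List (E × E) → S → Prop) : Prop :=
  IsHpBisim Tr R ∧ ∀ x f g y, R x (f ++ g) y → R x f y

/-- Hereditary history-preserving bisimilarity `~hhp`. -/
def HhpBisimilar (x y : S) : Prop := ∃ R, IsHhpBisim Tr R ∧ R x [] y

end BisimCore

namespace BATC

/-- BATC terms: atomic events, alternative composition `+`,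
and sequential composition `·`. -/
inductive Term (E : Type) : Type where
  | atom : E → Term E
  | alt : Term E → Term E → Term E
  | seq : Term E → Term E → Term E

variable {E : Type}

/-- The operational semantics of BATC: `Tr x X o` means `x ─X→ o`,
where `o = none` denotes successful termination √.  Atomic events of BATC
perform single-event steps. -/
inductive Tr : Term E → Finset E → Option (Term E) → Prop where
  | atom (e : E) : Tr (Term.atom e) {e} none
  | altL {x y X o} : Tr x X o → Tr (Term.alt x y) X o
  | altR {x y X o} : Tr y X o → Tr (Term.alt x y) X o
  | seqD {x y X} : Tr x X none → Tr (Term.seq x y) X (some y)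
  | seqS {x y X x'} : Tr x X (some x') → Tr (Term.seq x y) X (some (Term.seq x' y))

/-- Derivability from the BATC axioms A1–A5 together with the standard laws of
equational logic (reflexivity, symmetry, transitivity and congruence). -/
inductive Deriv : Term E → Term E → Prop where
  | refl (x) : Deriv x x
  | symm {x y} : Deriv x y → Deriv y x
  | trans {x y z} : Deriv x y → Deriv y z → Deriv x z
  | altCongr {x x' y y'} : Deriv x x' → Deriv y y' → Deriv (Term.alt x y) (Term.alt x' y')
  | seqCongr {x x' y y'} : Deriv x x' → Deriv y y' → Deriv (Term.seq x y) (Term.seq x' y')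
  | A1 (x y) : Deriv (Term.alt x y) (Term.alt y x)
  | A2 (x y z) : Deriv (Term.alt (Term.alt x y) z) (Term.alt x (Term.alt y z))
  | A3 (x) : Deriv (Term.alt x x) x
  | A4 (x y z) : Deriv (Term.seq (Term.alt x y) z) (Term.alt (Term.seq x z) (Term.seq y z))
  | A5 (x y z) : Deriv (Term.seq (Term.seq x y) z) (Term.seq x (Term.seq y z))

end BATC

namespace BATC

variable {E : Type}

open Term

/-- Size of a term. -/
def sz : Term E → Nat
  | atom _ => 1
  | alt x y => sz x + sz y + 1
  | seq x y => sz x + sz y + 1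

lemma sz_pos (p : Term E) : 1 ≤ sz p := by cases p <;> simp [sz]

/-- Postcompose a residual with `y`. -/
def shift (y : Term E) : E × Option (Term E) → E × Option (Term E)
  | (e, none) => (e, some y)
  | (e, some t) => (e, some (Term.seq t y))

/-- The list of transitions of a term. -/
def trl : Term E → List (E × Option (Term E))
  | atom e => [(e, none)]
  | alt x y => trl x ++ trl y
  | seq x y => (trl x).map (shift y)

lemma trl_ne (p : Term E) : trl p ≠ [] := by
  induction p with
  | atom e => simp [trl]
  | alt x y ihx ihy =>
    intro h
    exact ihx (List.append_eq_nil_iff.mp h).1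
  | seq x y ihx ihy =>
    intro h
    exact ihx (List.map_eq_nil_iff.mp h)

/-- Summand term of a transition. -/
def summand : E × Option (Term E) → Term E
  | (e, none) => atom e
  | (e, some t) => seq (atom e) t

/-- Sum of a nonempty list of summands. -/
def mkSum : (E × Option (Term E)) → List (E × Option (Term E)) → Term E
  | s, [] => summand s
  | s, t :: l => Term.alt (summand s) (mkSum t l)

lemma trl_tr {p : Term E} {e : E} {o : Option (Term E)}
    (h : (e, o) ∈ trl p) : Tr p {e} o := by
  induction p generalizing e o with
  | atom a =>
    simp [trl] at h
    obtain ⟨rfl, rfl⟩ := h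
    exact Tr.atom _
  | alt x y ihx ihy =>
    simp only [trl, List.mem_append] at h
    rcases h with h | h
    · exact Tr.altL (ihx h)
    · exact Tr.altR (ihy h)
  | seq x y ihx ihy =>
    simp only [trl, List.mem_map] at h
    obtain ⟨⟨e', o'⟩, hmem, heq⟩ := h
    cases o' with
    | none =>
      simp [shift] at heq
      obtain ⟨rfl, rfl⟩ := heq
      exact Tr.seqD (ihx hmem)
    | some t =>
      simp [shift] at heq
      obtain ⟨rfl, rfl⟩ := heq
      exact Tr.seqS (ihx hmem)

lemma tr_trl {p : Term E} {X : Finset E} {o : Option (Term E)}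
    (h : Tr p X o) : ∃ e, X = {e} ∧ (e, o) ∈ trl p := by
  induction h with
  | atom e => exact ⟨e, rfl, by simp [trl]⟩
  | altL h ih =>
    obtain ⟨e, hX, hm⟩ := ih
    exact ⟨e, hX, List.mem_append_left _ hm⟩
  | altR h ih =>
    obtain ⟨e, hX, hm⟩ := ih
    exact ⟨e, hX, List.mem_append_right _ hm⟩
  | seqD h ih =>
    obtain ⟨e, hX, hm⟩ := ih
    refine ⟨e, hX, ?_⟩
    simp only [trl, List.mem_map]
    exact ⟨(e, none), hm, rfl⟩
  | seqS h ih =>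
    obtain ⟨e, hX, hm⟩ := ih
    refine ⟨e, hX, ?_⟩
    simp only [trl, List.mem_map]
    exact ⟨(e, some _), hm, rfl⟩

lemma tr_singleton {p : Term E} {X : Finset E} {o : Option (Term E)}
    (h : Tr p X o) : ∃ e, X = {e} := by
  obtain ⟨e, hX, _⟩ := tr_trl h; exact ⟨e, hX⟩

lemma trl_size {p t : Term E} {e : E} (h : (e, some t) ∈ trl p) : sz t < sz p := by
  induction p generalizing e t with
  | atom a => simp [trl] at h
  | alt x y ihx ihy =>
    simp only [trl, List.mem_append] at h
    rcases h with h | h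
    · have := ihx h; simp [sz]; omega
    · have := ihy h; simp [sz]; omega
  | seq x y ihx ihy =>
    simp only [trl, List.mem_map] at h
    obtain ⟨⟨e', o'⟩, hmem, heq⟩ := h
    cases o' with
    | none =>
      simp [shift] at heq
      obtain ⟨rfl, rfl⟩ := heq
      have := sz_pos x; simp [sz]
    | some t' =>
      simp [shift] at heq
      obtain ⟨rfl, rfl⟩ := heq
      have := ihx hmem
      simp [sz]; omega

/-- swap: (x+y)+z = (x+z)+y -/
lemma deriv_swap (x y z : Term E) :
    Deriv (Term.alt (Term.alt x y) z) (Term.alt (Term.alt x z) y) :=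
  Deriv.trans (Deriv.A2 x y z)
    (Deriv.trans (Deriv.altCongr (Deriv.refl x) (Deriv.A1 y z))
      (Deriv.symm (Deriv.A2 x z y)))

lemma mkSum_append (s t : E × Option (Term E)) :
    ∀ (l m : List (E × Option (Term E))),
    Deriv (Term.alt (mkSum s l) (mkSum t m)) (mkSum s (l ++ t :: m)) := by
  intro l
  induction l generalizing s with
  | nil => intro m; exact Deriv.refl _
  | cons a l ih =>
    intro m
    show Deriv (Term.alt (Term.alt (summand s) (mkSum a l)) (mkSum t m)) _
    exact Deriv.trans (Deriv.A2 _ _ _)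
      (Deriv.altCongr (Deriv.refl _) (ih a m))

lemma summand_shift (y : Term E) (s : E × Option (Term E)) :
    Deriv (Term.seq (summand s) y) (summand (shift y s)) := by
  obtain ⟨e, o⟩ := s
  cases o with
  | none => exact Deriv.refl _
  | some t => exact Deriv.A5 _ _ _

lemma mkSum_seq (y : Term E) :
    ∀ (l : List (E × Option (Term E))) (s : E × Option (Term E)),
    Deriv (Term.seq (mkSum s l) y) (mkSum (shift y s) (l.map (shift y))) := by
  intro l
  induction l with
  | nil => intro s; exact summand_shift y s
  | cons a l ih =>
    intro s
    show Deriv (Term.seq (Term.alt (summand s) (mkSum a l)) y) _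
    exact Deriv.trans (Deriv.A4 _ _ _)
      (Deriv.altCongr (summand_shift y s) (ih a))

/-- Head normal form: every term is provably a sum of its transitions' summands. -/
lemma hnf : ∀ (p : Term E) (s : E × Option (Term E)) (l : List (E × Option (Term E))),
    trl p = s :: l → Deriv p (mkSum s l) := by
  intro p
  induction p with
  | atom e =>
    intro s l h
    simp [trl] at h
    obtain ⟨rfl, rfl⟩ := h
    exact Deriv.refl _
  | alt x y ihx ihy =>
    intro s l h
    obtain ⟨s1, l1, h1⟩ : ∃ s1 l1, trl x = s1 :: l1 := by
      cases hx : trl x with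
      | nil => exact absurd hx (trl_ne x)
      | cons a b => exact ⟨a, b, rfl⟩
    obtain ⟨s2, l2, h2⟩ : ∃ s2 l2, trl y = s2 :: l2 := by
      cases hy : trl y with
      | nil => exact absurd hy (trl_ne y)
      | cons a b => exact ⟨a, b, rfl⟩
    have : trl (Term.alt x y) = s1 :: (l1 ++ s2 :: l2) := by
      simp [trl, h1, h2]
    rw [this] at h
    obtain ⟨rfl, rfl⟩ : s1 = s ∧ l1 ++ s2 :: l2 = l := by
      constructor <;> [exact (List.cons.injEq _ _ _ _ ▸ h).1; exact (List.cons.injEq _ _ _ _ ▸ h).2]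
    exact Deriv.trans (Deriv.altCongr (ihx _ _ h1) (ihy _ _ h2)) (mkSum_append _ _ _ _)
  | seq x y ihx ihy =>
    intro s l h
    obtain ⟨s1, l1, h1⟩ : ∃ s1 l1, trl x = s1 :: l1 := by
      cases hx : trl x with
      | nil => exact absurd hx (trl_ne x)
      | cons a b => exact ⟨a, b, rfl⟩
    have : trl (Term.seq x y) = shift y s1 :: (l1.map (shift y)) := by
      simp [trl, h1]
    rw [this] at h
    obtain ⟨rfl, rfl⟩ : shift y s1 = s ∧ l1.map (shift y) = l := by
      constructor <;> [exact (List.cons.injEq _ _ _ _ ▸ h).1; exact (List.cons.injEq _ _ _ _ ▸ h).2]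
    exact Deriv.trans (Deriv.seqCongr (ihx _ _ h1) (Deriv.refl y)) (mkSum_seq y l1 s1)

/-- Absorption of a single provably-included summand. -/
lemma absorb1 {u : Term E} :
    ∀ (l : List (E × Option (Term E))) (b s' : E × Option (Term E)),
    s' ∈ (b :: l : List _) → Deriv u (summand s') →
    Deriv (Term.alt (mkSum b l) u) (mkSum b l) := by
  intro l
  induction l with
  | nil =>
    intro b s' hm hd
    simp at hm
    subst hm
    exact Deriv.trans (Deriv.altCongr (Deriv.refl _) hd) (Deriv.A3 _)
  | cons c l ih =>
    intro b s' hm hd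
    show Deriv (Term.alt (Term.alt (summand b) (mkSum c l)) u)
      (Term.alt (summand b) (mkSum c l))
    rcases List.mem_cons.mp hm with rfl | hm
    · exact Deriv.trans (deriv_swap _ _ _)
        (Deriv.altCongr
          (Deriv.trans (Deriv.altCongr (Deriv.refl _) hd) (Deriv.A3 _))
          (Deriv.refl _))
    · exact Deriv.trans (Deriv.A2 _ _ _)
        (Deriv.altCongr (Deriv.refl _) (ih c s' hm hd))

/-- Absorption of a whole sum, each of whose summands is provably included. -/
lemma absorbAll {b : E × Option (Term E)} {l2 : List (E × Option (Term E))} :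
    ∀ (l1 : List (E × Option (Term E))) (a : E × Option (Term E)),
    (∀ s ∈ (a :: l1 : List _), ∃ s' ∈ (b :: l2 : List _), Deriv (summand s) (summand s')) →
    Deriv (Term.alt (mkSum b l2) (mkSum a l1)) (mkSum b l2) := by
  intro l1
  induction l1 with
  | nil =>
    intro a h
    obtain ⟨s', hm, hd⟩ := h a (by simp)
    exact absorb1 l2 b s' hm hd
  | cons c l1 ih =>
    intro a h
    show Deriv (Term.alt (mkSum b l2) (Term.alt (summand a) (mkSum c l1))) _
    obtain ⟨s', hm, hd⟩ := h a (by simp)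
    refine Deriv.trans (Deriv.symm (Deriv.A2 _ _ _)) ?_
    refine Deriv.trans (Deriv.altCongr (absorb1 l2 b s' hm hd) (Deriv.refl _)) ?_
    exact ih c (fun s hs => h s (by simp at hs ⊢; tauto))

/-- Completeness for step bisimilarity, by strong induction on sizes. -/
lemma step_complete : ∀ (n : ℕ) (p q : Term E), sz p + sz q ≤ n →
    StepBisimilar Tr p q → Deriv p q := by
  intro n
  induction n with
  | zero => intro p q h _; have := sz_pos p; omega
  | succ n ih =>
    intro p q hsz ⟨R, hR, hpq⟩
    obtain ⟨s, l, hp⟩ : ∃ s l, trl p = s :: l := by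
      cases hx : trl p with
      | nil => exact absurd hx (trl_ne p)
      | cons a b => exact ⟨a, b, rfl⟩
    obtain ⟨t, m, hq⟩ : ∃ t m, trl q = t :: m := by
      cases hx : trl q with
      | nil => exact absurd hx (trl_ne q)
      | cons a b => exact ⟨a, b, rfl⟩
    have H1 : ∀ x ∈ trl p, ∃ x' ∈ trl q, Deriv (summand x) (summand x') := by
      rintro ⟨e, o⟩ hx
      have htr : Tr p {e} o := trl_tr hx
      obtain ⟨y', hty, hrel⟩ := (hR p q hpq).1 {e} o htr
      obtain ⟨e', he', hmem⟩ := tr_trl hty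
      have : e' = e := by
        have := Finset.singleton_injective he'.symm
        exact this
      subst this
      refine ⟨(e', y'), hmem, ?_⟩
      cases o with
      | none =>
        cases y' with
        | none => exact Deriv.refl _
        | some t2 => exact absurd hrel (by simp [OptRel])
      | some t1 =>
        cases y' with
        | none => exact absurd hrel (by simp [OptRel])
        | some t2 =>
          have hlt1 := trl_size hx
          have hlt2 := trl_size hmem
          have : Deriv t1 t2 :=
            ih t1 t2 (by omega) ⟨R, hR, hrel⟩
          exact Deriv.seqCongr (Deriv.refl _) this
    have H2 : ∀ x ∈ trl q, ∃ x' ∈ trl p, Deriv (summand x) (summand x') := by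
      rintro ⟨e, o⟩ hx
      have htr : Tr q {e} o := trl_tr hx
      obtain ⟨y', hty, hrel⟩ := (hR p q hpq).2 {e} o htr
      obtain ⟨e', he', hmem⟩ := tr_trl hty
      have : e' = e := by
        have := Finset.singleton_injective he'.symm
        exact this
      subst this
      refine ⟨(e', y'), hmem, ?_⟩
      cases o with
      | none =>
        cases y' with
        | none => exact Deriv.refl _
        | some t2 => exact absurd hrel (by simp [OptRel])
      | some t1 =>
        cases y' with
        | none => exact absurd hrel (by simp [OptRel])
        | some t2 =>
          have hlt1 := trl_size hx
          have hlt2 := trl_size hmem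
          have : Deriv t2 t1 :=
            ih t2 t1 (by omega) ⟨R, hR, hrel⟩
          exact Deriv.seqCongr (Deriv.refl _) (Deriv.symm this)
    have hP : Deriv p (mkSum s l) := hnf p s l hp
    have hQ : Deriv q (mkSum t m) := hnf q t m hq
    have d1 : Deriv (Term.alt (mkSum t m) (mkSum s l)) (mkSum t m) :=
      absorbAll l s (by rw [← hp, ← hq]; exact H1)
    have d2 : Deriv (Term.alt (mkSum s l) (mkSum t m)) (mkSum s l) :=
      absorbAll m t (by rw [← hp, ← hq]; exact H2)
    have dPQ : Deriv (mkSum s l) (mkSum t m) :=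
      Deriv.trans (Deriv.symm d2) (Deriv.trans (Deriv.A1 _ _) d1)
    exact Deriv.trans hP (Deriv.trans dPQ (Deriv.symm hQ))

/-- Inversion of a one-step pomset transition. -/
lemma pomtr_single {S E : Type} {Tr : S → Finset E → Option S → Prop}
    {y : S} {X : Finset E} {o : Option S}
    (h : PomTr Tr y [X] o) : Tr y X o := by
  cases h with
  | single h => exact h
  | cons h h' => cases h'

lemma pomset_to_step {p q : Term E} (h : PomsetBisimilar Tr p q) :
    StepBisimilar Tr p q := by
  obtain ⟨R, hR, hpq⟩ := h
  refine ⟨R, ?_, hpq⟩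
  intro x y hxy
  constructor
  · intro X x' htr
    obtain ⟨y', hty, hrel⟩ := (hR x y hxy).1 [X] x' (PomTr.single htr)
    exact ⟨y', pomtr_single hty, hrel⟩
  · intro X y' htr
    obtain ⟨x', htx, hrel⟩ := (hR x y hxy).2 [X] y' (PomTr.single htr)
    exact ⟨x', pomtr_single htx, hrel⟩

lemma hp_to_step {p q : Term E} (h : HpBisimilar Tr p q) :
    StepBisimilar Tr p q := by
  obtain ⟨R, hR, hpq⟩ := h
  refine ⟨fun a b => ∃ f, R a f b, ?_, [], hpq⟩
  rintro x y ⟨f, hxy⟩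
  constructor
  · intro X x' htr
    obtain ⟨e, rfl⟩ := tr_singleton htr
    obtain ⟨y', hty, hrel⟩ := (hR x f y hxy).1 e x' htr
    refine ⟨y', hty, ?_⟩
    cases x' <;> cases y' <;> simp_all [OptRel]
    exact ⟨_, hrel⟩
  · intro X y' htr
    obtain ⟨e, rfl⟩ := tr_singleton htr
    obtain ⟨x', htx, hrel⟩ := (hR x f y hxy).2 e y' htr
    refine ⟨x', htx, ?_⟩
    cases x' <;> cases y' <;> simp_all [OptRel]
    exact ⟨_, hrel⟩

lemma hhp_to_step {p q : Term E} (h : HhpBisimilar Tr p q) :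
    StepBisimilar Tr p q := by
  obtain ⟨R, hR, hpq⟩ := h
  exact hp_to_step ⟨R, hR.1, hpq⟩

end BATC

/-- **Completeness of BATC modulo truly concurrent bisimulation equivalences.**
For all closed BATC terms `p` and `q`: if `p ~p q` then `p = q` is derivable
from the BATC axioms; likewise for `~s`, `~hp` and `~hhp`. -/
theorem BATC.completeness {E : Type} (p q : BATC.Term E) :
    (PomsetBisimilar BATC.Tr p q → BATC.Deriv p q) ∧
    (StepBisimilar BATC.Tr p q → BATC.Deriv p q) ∧
    (HpBisimilar BATC.Tr p q → BATC.Deriv p q) ∧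
    (HhpBisimilar BATC.Tr p q → BATC.Deriv p q) := by
  refine ⟨?_, ?_, ?_, ?_⟩
  · intro h
    exact BATC.step_complete (BATC.sz p + BATC.sz q) p q le_rfl (BATC.pomset_to_step h)
  · intro h
    exact BATC.step_complete (BATC.sz p + BATC.sz q) p q le_rfl h
  · intro h
    exact BATC.step_complete (BATC.sz p + BATC.sz q) p q le_rfl (BATC.hp_to_step h)
  · intro h
    exact BATC.step_complete (BATC.sz p + BATC.sz q) p q le_rfl (BATC.hhp_to_step h)

end TCA
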